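/- arXiv:1306.2545 — 2 statements merged into one kernel-verified Lean document; each statement's English description precedes it below -/
import Mathlib

section
/- Let (C, w) be a small Λ-category and let n, m ≥ 1. Let Φ be the map sending a cyclic (n+m)-chain (x_0, …, x_{n+m}; f_0, …, f_{n+m}) in C to the pair consisting of (i) the cyclic n-chain with objects x_0, …, x_n, morphisms f_0, …, f_{n−1}, and return morphism f_{n+m} ∘ f_{n+m−1} ∘ ⋯ ∘ f_n : x_n → x_0, and (ii) the cyclic (m+1)-chain with objects x_0, x_n, x_{n+1}, …, x_{n+m}, first morphism f_{n−1} ∘ ⋯ ∘ f_0 : x_0 → x_n, followed by f_n, …, f_{n+m−1}, and return morphism f_{n+m} : x_{n+m} → x_0. Then Φ restricts to an injective map on the set N^Λ_{n+m}(C) of Λ-cyclic (n+m)-chains, its values are pairs of Λ-cyclic chains, and its image consists exactly of the pairs of a Λ-cyclic n-chain (y_0, …, y_n; g_0, …, g_n) and a Λ-cyclic (m+1)-chain (z_0, …, z_{m+1}; h_0, …, h_{m+1}) such that y_0 = z_0, y_n = z_1, g_{n−1} ∘ ⋯ ∘ g_0 = h_0, and g_n = h_{m+1} ∘ h_m ∘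 ⋯ ∘ h_1. (This is the 2-Segal map of the Λ-nerve of (C, w) associated with the subdivision of the (n+m+1)-gon with vertices 0, …, n+m along the diagonal {0, n}; its bijectivity onto the fiber product is the elementary case of the proposition that the Λ-nerve of a small Λ-category is a 2-Segal cyclic set.) -/
open CategoryTheory

universe v u

/-- A cyclic `n`-chain in a category `C`: objects `x_0, …, x_n`, morphisms
`f_k : x_k → x_{k+1}` for `0 ≤ k < n`, and a return morphism `f_n : x_n → x_0`.
This is the `n`-th component of the cyclic nerve of `C`. -/
structure CyclicChain (C : Type u) [Category.{v} C] (n : ℕ) where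
  obj : ∀ k : ℕ, k ≤ n → C
  map : ∀ k : ℕ, (h : k < n) → (obj k h.le ⟶ obj (k + 1) h)
  ret : obj n le_rfl ⟶ obj 0 (Nat.zero_le n)

namespace CyclicChain

variable {C : Type u} [Category.{v} C] {n : ℕ}

theorem obj_congr (c : CyclicChain C n) {a b : ℕ} (h : a = b) (ha : a ≤ n) (hb : b ≤ n) :
    c.obj a ha = c.obj b hb := by subst h; rfl

/-- The composite `f_{b-1} ∘ ⋯ ∘ f_a : x_a → x_b` of consecutive morphisms of a chain
(the identity when `a = b`). -/
def comp (c : CyclicChain C n) : ∀ (a b : ℕ) (hab : a ≤ b) (hb : b ≤ n),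
    (c.obj a (by omega) ⟶ c.obj b hb)
  | a, 0, hab, hb => eqToHom (c.obj_congr (Nat.le_zero.mp hab) _ _)
  | a, b + 1, hab, hb =>
    if h : a = b + 1 then eqToHom (c.obj_congr h _ _)
    else c.comp a b (by omega) (by omega) ≫ c.map b (by omega)

end CyclicChain

variable {C : Type u} [Category.{v} C]

/-- The `2`-Segal map of the cyclic nerve associated with the subdivision of the
`(n+m+1)`-gon with vertices `0, …, n+m` along the diagonal `{0, n}`: it sends a cyclic
`(n+m)`-chain to (i) the cyclic `n`-chain `(x_0, …, x_n; f_0, …, f_{n-1},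
f_{n+m} ∘ ⋯ ∘ f_n)` and (ii) the cyclic `(m+1)`-chain
`(x_0, x_n, …, x_{n+m}; f_{n-1} ∘ ⋯ ∘ f_0, f_n, …, f_{n+m-1}, f_{n+m})`. -/
def cyclicSegalMap (n m : ℕ) (c : CyclicChain C (n + m)) :
    CyclicChain C n × CyclicChain C (m + 1) :=
  (⟨fun k h => c.obj k (by omega),
    fun k h => c.map k (by omega),
    c.comp n (n + m) (by omega) le_rfl ≫ c.ret⟩,
   ⟨fun k hk => match k, hk with
      | 0, _ => c.obj 0 (by omega)
      | j + 1, hk => c.obj (n + j) (by omega),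
    fun k hk => match k, hk with
      | 0, _ => c.comp 0 n (by omega) (by omega)
      | j + 1, hk => c.map (n + j) (by omega),
    c.ret⟩)

/-- A `Λ`-cyclic chain in a `Λ`-category `(C, w)`: a cyclic chain such that for every
`0 ≤ i ≤ n` the composite of all `n+1` morphisms of the chain around the cycle, starting and
ending at `x_i`, equals `w_{x_i}`.  These are the components of the `Λ`-nerve of `(C, w)`. -/
def IsLambdaChain {C : Type u} [Category.{v} C] (w : 𝟭 C ⟶ 𝟭 C) {n : ℕ}
    (c : CyclicChain C n) : Prop :=
  ∀ (i : ℕ) (h : i ≤ n),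
    c.comp i n h le_rfl ≫ c.ret ≫ c.comp 0 i (Nat.zero_le i) h = w.app (c.obj i h)

/-!
Every composite of consecutive edges of a chain `c` survives in `Φ c`: those inside `[0, n]` in
the first piece, those inside `[n, n + m]` and `x_0 → x_n` in the second. Hence the loop around
the cycle at a vertex of either piece is the loop of `c` at the same vertex, so `c` is a
`Λ`-chain iff both pieces are. Every object and edge of `c` occurs in one of the pieces, so `Φ`
is injective; and a compatible pair is the image of the chain `(y_0, …, y_n = z_1, …, z_{m+1};
g_0, …, g_{n-1}, h_1, …, h_{m+1})`, which is then a `Λ`-chain by the first remark.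
-/

namespace CyclicChain

variable {n : ℕ}

theorem comp_self (c : CyclicChain C n) (a : ℕ) (h : a ≤ n) :
    c.comp a a le_rfl h = 𝟙 _ := by
  cases a <;> simp [comp]

theorem comp_succ (c : CyclicChain C n) (a b : ℕ) (hab : a ≤ b) (hb : b + 1 ≤ n) :
    c.comp a (b + 1) (by omega) hb = c.comp a b hab (by omega) ≫ c.map b hb := by
  rw [comp, dif_neg (by omega)]

theorem comp_comp (c : CyclicChain C n) (a b d : ℕ) (hab : a ≤ b) (hbd : b ≤ d)
    (hd : d ≤ n) :
    c.comp a b hab (by omega) ≫ c.comp b d hbd hd = c.comp a d (by omega) hd := by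
  induction d, hbd using Nat.le_induction with
  | base => rw [comp_self, Category.comp_id]
  | succ d hbd ih =>
    rw [comp_succ c b d hbd hd, comp_succ c a d (by omega) hd, ← Category.assoc, ih (by omega)]

theorem comp_zero_one (c : CyclicChain C n) (h : 1 ≤ n) :
    c.comp 0 1 (by omega) h = c.map 0 h := by
  rw [comp_succ c 0 0 le_rfl h, comp_self, Category.id_comp]

theorem map_congr (c : CyclicChain C n) {a b : ℕ} (h : a = b) (ha : a < n) (hb : b < n) :
    c.map a ha = eqToHom (c.obj_congr h _ _) ≫ c.map b hb ≫
      eqToHom (c.obj_congr (by omega) _ _) := by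
  subst h; simp

theorem comp_congr (c : CyclicChain C n) {a b a' b' : ℕ} (h1 : a = a') (h2 : b = b')
    (hab : a ≤ b) (hb : b ≤ n) (hab' : a' ≤ b') (hb' : b' ≤ n) :
    c.comp a b hab hb = eqToHom (c.obj_congr h1 _ _) ≫ c.comp a' b' hab' hb' ≫
      eqToHom (c.obj_congr h2.symm _ _) := by
  subst h1 h2; simp

theorem congr_obj {s t : CyclicChain C n} (h : s = t) (k : ℕ) (hk : k ≤ n) :
    s.obj k hk = t.obj k hk := by subst h; rfl

theorem congr_map {s t : CyclicChain C n} (h : s = t) (k : ℕ) (hk : k < n) :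
    s.map k hk = eqToHom (congr_obj h k hk.le) ≫ t.map k hk ≫
      eqToHom (congr_obj h (k + 1) hk).symm := by
  subst h; simp

theorem congr_ret {s t : CyclicChain C n} (h : s = t) :
    s.ret = eqToHom (congr_obj h n le_rfl) ≫ t.ret ≫
      eqToHom (congr_obj h 0 (Nat.zero_le n)).symm := by
  subst h; simp

theorem ext {s t : CyclicChain C n} (hobj : ∀ k (hk : k ≤ n), s.obj k hk = t.obj k hk)
    (hmap : ∀ k (hk : k < n), s.map k hk = eqToHom (hobj k hk.le) ≫ t.map k hk ≫
      eqToHom (hobj (k + 1) hk).symm)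
    (hret : s.ret = eqToHom (hobj n le_rfl) ≫ t.ret ≫ eqToHom (hobj 0 (Nat.zero_le n)).symm) :
    s = t := by
  obtain ⟨o, f, r⟩ := s
  obtain ⟨o', f', r'⟩ := t
  obtain rfl : o = o' := funext fun k => funext (hobj k)
  simp only [eqToHom_refl, Category.comp_id, Category.id_comp] at hmap hret
  obtain rfl : f = f' := funext fun k => funext (hmap k)
  rw [hret]

def loop (c : CyclicChain C n) (i : ℕ) (h : i ≤ n) : c.obj i h ⟶ c.obj i h :=
  c.comp i n h le_rfl ≫ c.ret ≫ c.comp 0 i (Nat.zero_le i) h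

theorem isLambdaChain_iff_loop (w : 𝟭 C ⟶ 𝟭 C) (c : CyclicChain C n) :
    IsLambdaChain w c ↔ ∀ i (h : i ≤ n), c.loop i h = w.app (c.obj i h) :=
  Iff.rfl

end CyclicChain

open CyclicChain

section SegalMap

variable {n m : ℕ} (c : CyclicChain C (n + m))

theorem cyclicSegalMap_fst_comp (a b : ℕ) (hab : a ≤ b) (hb : b ≤ n) :
    (cyclicSegalMap n m c).1.comp a b hab hb = c.comp a b hab (by omega) := by
  induction b, hab using Nat.le_induction with
  | base => rw [comp_self, comp_self]; rfl
  | succ b hab ih =>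
    rw [comp_succ _ a b hab hb, comp_succ c a b hab (by omega), ih (by omega)]
    rfl

theorem cyclicSegalMap_snd_comp_succ (a b : ℕ) (hab : a ≤ b) (hb : b ≤ m) :
    (cyclicSegalMap n m c).2.comp (a + 1) (b + 1) (by omega) (by omega)
      = c.comp (n + a) (n + b) (by omega) (by omega) := by
  induction b, hab using Nat.le_induction with
  | base => rw [comp_self, comp_self]; rfl
  | succ b hab ih =>
    rw [comp_succ _ (a + 1) (b + 1) (by omega) (by omega), ih (by omega)]
    exact (comp_succ c (n + a) (n + b) (by omega) (by omega)).symm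

theorem cyclicSegalMap_snd_comp_zero (b : ℕ) (hb : b ≤ m) :
    (cyclicSegalMap n m c).2.comp 0 (b + 1) (by omega) (by omega)
      = c.comp 0 (n + b) (by omega) (by omega) := by
  induction b with
  | zero => exact comp_zero_one _ (by omega)
  | succ b ih =>
    rw [comp_succ _ 0 (b + 1) (by omega) (by omega), ih (by omega)]
    exact (comp_succ c 0 (n + b) (by omega) (by omega)).symm

theorem cyclicSegalMap_fst_loop (i : ℕ) (h : i ≤ n) :
    (cyclicSegalMap n m c).1.loop i h = c.loop i (by omega) := by
  rw [loop, loop, cyclicSegalMap_fst_comp, cyclicSegalMap_fst_comp,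
    ← comp_comp c i n (n + m) h (by omega) le_rfl, Category.assoc]
  exact congrArg (_ ≫ ·) (Category.assoc _ _ _)

theorem cyclicSegalMap_snd_loop_zero :
    (cyclicSegalMap n m c).2.loop 0 (Nat.zero_le _) = c.loop 0 (Nat.zero_le _) := by
  rw [loop, loop, cyclicSegalMap_snd_comp_zero c m le_rfl, comp_self, comp_self]
  rfl

theorem cyclicSegalMap_snd_loop_succ (j : ℕ) (h : j ≤ m) :
    (cyclicSegalMap n m c).2.loop (j + 1) (by omega) = c.loop (n + j) (by omega) := by
  rw [loop, loop, cyclicSegalMap_snd_comp_succ c j m h le_rfl,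
    cyclicSegalMap_snd_comp_zero c j h]
  rfl

theorem isLambdaChain_iff_cyclicSegalMap (w : 𝟭 C ⟶ 𝟭 C) :
    IsLambdaChain w c ↔
      IsLambdaChain w (cyclicSegalMap n m c).1 ∧ IsLambdaChain w (cyclicSegalMap n m c).2 := by
  simp only [isLambdaChain_iff_loop]
  refine ⟨fun hc => ⟨fun i h => ?_, fun i h => ?_⟩, fun ⟨h1, h2⟩ i h => ?_⟩
  · rw [cyclicSegalMap_fst_loop]; exact hc i _
  · cases i with
    | zero => rw [cyclicSegalMap_snd_loop_zero]; exact hc 0 _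
    | succ j => rw [cyclicSegalMap_snd_loop_succ c j (by omega)]; exact hc (n + j) _
  · by_cases hi : i ≤ n
    · rw [← cyclicSegalMap_fst_loop c i hi]; exact h1 i hi
    · obtain ⟨j, rfl⟩ : ∃ j, i = n + j := ⟨i - n, by omega⟩
      rw [← cyclicSegalMap_snd_loop_succ c j (by omega)]; exact h2 (j + 1) (by omega)

theorem cyclicSegalMap_injective : Function.Injective (cyclicSegalMap (C := C) n m) := by
  intro c c' hseg
  have h1 := congrArg Prod.fst hseg
  have h2 := congrArg Prod.snd hseg
  have hobj : ∀ k (hk : k ≤ n + m), c.obj k hk = c'.obj k hk := by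
    intro k hk
    by_cases hkn : k ≤ n
    · exact congr_obj h1 k hkn
    · obtain ⟨j, rfl⟩ : ∃ j, k = n + j := ⟨k - n, by omega⟩
      exact congr_obj h2 (j + 1) (by omega)
  refine CyclicChain.ext hobj (fun k hk => ?_) (congr_ret h2)
  by_cases hkn : k < n
  · exact congr_map h1 k hkn
  · obtain ⟨j, rfl⟩ : ∃ j, k = n + j := ⟨k - n, by omega⟩
    exact congr_map h2 (j + 1) (by omega)

theorem cyclicSegalMap_compatible {cn : CyclicChain C n} {cm : CyclicChain C (m + 1)}
    (hc : cyclicSegalMap n m c = (cn, cm)) :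
    ∃ (e0 : cn.obj 0 (Nat.zero_le n) = cm.obj 0 (Nat.zero_le (m + 1)))
      (e1 : cn.obj n le_rfl = cm.obj 1 (Nat.le_add_left 1 m)),
      cn.comp 0 n (Nat.zero_le n) le_rfl
          = eqToHom e0 ≫ cm.map 0 (Nat.succ_pos m) ≫ eqToHom e1.symm ∧
      cn.ret = eqToHom e1 ≫ cm.comp 1 (m + 1) (Nat.le_add_left 1 m) le_rfl ≫ cm.ret
          ≫ eqToHom e0.symm := by
  obtain ⟨rfl, rfl⟩ := Prod.ext_iff.mp hc.symm
  refine ⟨rfl, rfl, ?_, ?_⟩ <;>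
    erw [eqToHom_refl, eqToHom_refl, Category.id_comp, Category.comp_id]
  · exact cyclicSegalMap_fst_comp c 0 n (Nat.zero_le n) le_rfl
  · rw [cyclicSegalMap_snd_comp_succ c 0 m (Nat.zero_le m) le_rfl]
    rfl

end SegalMap

namespace CyclicChain

section Glue

variable {n m : ℕ} (cn : CyclicChain C n) (cm : CyclicChain C (m + 1))

def glueObj (k : ℕ) (_ : k ≤ n + m) : C :=
  if hk : k ≤ n then cn.obj k hk else cm.obj (k - n + 1) (by omega)

theorem glueObj_of_le (k : ℕ) (h : k ≤ n + m) (hk : k ≤ n) :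
    glueObj cn cm k h = cn.obj k hk :=
  dif_pos hk

variable {cn cm}

theorem glueObj_of_ge (e1 : cn.obj n le_rfl = cm.obj 1 (Nat.le_add_left 1 m)) (k : ℕ)
    (h : k ≤ n + m) (hk : n ≤ k) : glueObj cn cm k h = cm.obj (k - n + 1) (by omega) := by
  by_cases h' : k ≤ n
  · obtain rfl : k = n := le_antisymm h' hk
    rw [glueObj_of_le cn cm k h h', e1]
    exact cm.obj_congr (by omega) _ _
  · exact dif_neg h'

variable (cn cm)

-- Reducible, so that `simp` sees `(glue cn cm e0 e1).obj` as `glueObj cn cm`.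
abbrev glue (e0 : cn.obj 0 (Nat.zero_le n) = cm.obj 0 (Nat.zero_le (m + 1)))
    (e1 : cn.obj n le_rfl = cm.obj 1 (Nat.le_add_left 1 m)) : CyclicChain C (n + m) where
  obj := glueObj cn cm
  map k hk :=
    if hkn : k < n then
      eqToHom (glueObj_of_le cn cm k _ (by omega)) ≫ cn.map k hkn ≫
        eqToHom (glueObj_of_le cn cm (k + 1) _ hkn).symm
    else
      eqToHom (glueObj_of_ge e1 k _ (by omega)) ≫ cm.map (k - n + 1) (by omega) ≫
        eqToHom ((cm.obj_congr (by omega) _ _).trans (glueObj_of_ge e1 (k + 1) _ (by omega)).symm)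
  ret :=
    eqToHom ((glueObj_of_ge e1 (n + m) le_rfl (by omega)).trans (cm.obj_congr (by omega) _ _)) ≫
      cm.ret ≫ eqToHom (e0.symm.trans (glueObj_of_le cn cm 0 _ (Nat.zero_le n)).symm)

variable {cn cm} {e0 : cn.obj 0 (Nat.zero_le n) = cm.obj 0 (Nat.zero_le (m + 1))}
  {e1 : cn.obj n le_rfl = cm.obj 1 (Nat.le_add_left 1 m)}

theorem glue_map_of_lt (k : ℕ) (hk : k < n) :
    (glue cn cm e0 e1).map k (by omega)
      = eqToHom (glueObj_of_le cn cm k (by omega) (by omega)) ≫ cn.map k hk ≫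
        eqToHom (glueObj_of_le cn cm (k + 1) (by omega) hk).symm :=
  dif_pos hk

theorem glue_map_of_ge (k : ℕ) (hk : n ≤ k) (h : k < n + m) :
    (glue cn cm e0 e1).map k h
      = eqToHom (glueObj_of_ge e1 k (by omega) hk) ≫ cm.map (k - n + 1) (by omega) ≫
        eqToHom ((cm.obj_congr (by omega) (by omega) (by omega)).trans
          (glueObj_of_ge e1 (k + 1) h (by omega)).symm) :=
  dif_neg (by omega)

theorem glue_comp_of_le (a b : ℕ) (hab : a ≤ b) (hb : b ≤ n) :
    (glue cn cm e0 e1).comp a b hab (by omega)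
      = eqToHom (glueObj_of_le cn cm a (by omega) (by omega)) ≫ cn.comp a b hab hb ≫
        eqToHom (glueObj_of_le cn cm b (by omega) hb).symm := by
  induction b, hab using Nat.le_induction with
  | base => simp only [comp_self, eqToHom_refl, Category.id_comp, eqToHom_trans]
  | succ b hab ih =>
    rw [comp_succ _ a b hab (by omega), ih (by omega), comp_succ cn a b hab hb,
      glue_map_of_lt b hb]
    simp

theorem glue_comp_of_ge (a b : ℕ) (ha : n ≤ a) (hab : a ≤ b) (hb : b ≤ n + m) :
    (glue cn cm e0 e1).comp a b hab hb
      = eqToHom (glueObj_of_ge e1 a (by omega) ha) ≫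
        cm.comp (a - n + 1) (b - n + 1) (by omega) (by omega) ≫
        eqToHom (glueObj_of_ge e1 b hb (by omega)).symm := by
  induction b, hab using Nat.le_induction with
  | base => simp only [comp_self, eqToHom_refl, Category.id_comp, eqToHom_trans]
  | succ b hab ih =>
    rw [comp_succ _ a b hab hb, ih (by omega),
      cm.comp_congr rfl (show b + 1 - n + 1 = b - n + 1 + 1 by omega) (by omega) (by omega)
        (by omega) (by omega),
      comp_succ cm (a - n + 1) (b - n + 1) (by omega) (by omega), glue_map_of_ge b (by omega) hb]
    simp

theorem cyclicSegalMap_glue_fst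
    (hret : cn.ret = eqToHom e1 ≫ cm.comp 1 (m + 1) (Nat.le_add_left 1 m) le_rfl ≫ cm.ret ≫
      eqToHom e0.symm) :
    (cyclicSegalMap n m (glue cn cm e0 e1)).1 = cn := by
  have hobj (k : ℕ) (hk : k ≤ n) : (cyclicSegalMap n m (glue cn cm e0 e1)).1.obj k hk
      = cn.obj k hk := glueObj_of_le cn cm k (by omega) hk
  refine CyclicChain.ext hobj (fun k hk => ?_) ?_
  · exact glue_map_of_lt (e0 := e0) (e1 := e1) k hk
  · show (glue cn cm e0 e1).comp n (n + m) (by omega) le_rfl ≫ (glue cn cm e0 e1).ret = _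
    rw [glue_comp_of_ge n (n + m) le_rfl (by omega) le_rfl, cm.comp_congr (show n - n + 1 = 1 by
      omega) (show n + m - n + 1 = m + 1 by omega) (by omega) (by omega) (by omega) le_rfl, hret]
    simp only [Category.assoc, eqToHom_trans_assoc, eqToHom_refl, Category.id_comp, eqToHom_trans]
    rfl

theorem cyclicSegalMap_glue_snd
    (hcomp : cn.comp 0 n (Nat.zero_le n) le_rfl = eqToHom e0 ≫ cm.map 0 (Nat.succ_pos m) ≫
      eqToHom e1.symm) :
    (cyclicSegalMap n m (glue cn cm e0 e1)).2 = cm := by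
  have hobj (k : ℕ) (hk : k ≤ m + 1) : (cyclicSegalMap n m (glue cn cm e0 e1)).2.obj k hk
      = cm.obj k hk := by
    match k, hk with
    | 0, _ => exact (glueObj_of_le cn cm 0 (by omega) (by omega)).trans e0
    | j + 1, _ =>
      exact (glueObj_of_ge e1 (n + j) (by omega) (by omega)).trans (cm.obj_congr (by omega) _ _)
  refine CyclicChain.ext hobj (fun k hk => ?_) ?_
  · match k, hk with
    | 0, _ =>
      show (glue cn cm e0 e1).comp 0 n (by omega) (by omega) = _
      rw [glue_comp_of_le 0 n (Nat.zero_le n) le_rfl, hcomp]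
      simp only [Category.assoc, eqToHom_trans, eqToHom_trans_assoc]
      rfl
    | j + 1, _ =>
      show (glue cn cm e0 e1).map (n + j) (by omega) = _
      rw [glue_map_of_ge (n + j) (by omega) (by omega),
        cm.map_congr (show n + j - n + 1 = j + 1 by omega) (by omega) (by omega)]
      simp only [Category.assoc, eqToHom_trans, eqToHom_trans_assoc]
      rfl
  · show (glue cn cm e0 e1).ret = _
    rfl

end Glue

end CyclicChain

/-- For a small `Λ`-category `(C, w)` and `n, m ≥ 1`, the `2`-Segal map `Φ` of
the `Λ`-nerve of `(C, w)` associated with the subdivision of the `(n+m+1)`-gon along the diagonal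
`{0, n}` restricts to an injective map on `Λ`-cyclic `(n+m)`-chains, its values are pairs of
`Λ`-cyclic chains, and its image consists exactly of the pairs of a `Λ`-cyclic `n`-chain
`(y_•; g_•)` and a `Λ`-cyclic `(m+1)`-chain `(z_•; h_•)` with `y_0 = z_0`, `y_n = z_1`,
`g_{n-1} ∘ ⋯ ∘ g_0 = h_0` and `g_n = h_{m+1} ∘ ⋯ ∘ h_1`. -/
theorem lambdaNerve_twoSegal (C : Type u) [SmallCategory C] (w : 𝟭 C ⟶ 𝟭 C) (n m : ℕ) :
    (Set.InjOn (cyclicSegalMap (C := C) n m) {c | IsLambdaChain w c}) ∧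
    (∀ c : CyclicChain C (n + m), IsLambdaChain w c →
      IsLambdaChain w (cyclicSegalMap n m c).1 ∧ IsLambdaChain w (cyclicSegalMap n m c).2) ∧
    (∀ (cn : CyclicChain C n) (cm : CyclicChain C (m + 1)),
      IsLambdaChain w cn → IsLambdaChain w cm →
      ((∃ c : CyclicChain C (n + m), IsLambdaChain w c ∧ cyclicSegalMap n m c = (cn, cm)) ↔
        ∃ (e0 : cn.obj 0 (Nat.zero_le n) = cm.obj 0 (Nat.zero_le (m + 1)))
          (e1 : cn.obj n le_rfl = cm.obj 1 (by omega)),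
          cn.comp 0 n (Nat.zero_le n) le_rfl
              = eqToHom e0 ≫ cm.map 0 (by omega) ≫ eqToHom e1.symm ∧
          cn.ret = eqToHom e1 ≫ cm.comp 1 (m + 1) (by omega) le_rfl ≫ cm.ret
              ≫ eqToHom e0.symm)) := by
  refine ⟨cyclicSegalMap_injective.injOn, fun c => (isLambdaChain_iff_cyclicSegalMap c w).mp,
    fun cn cm hcn hcm => ⟨fun ⟨c, _, hc⟩ => cyclicSegalMap_compatible c hc, ?_⟩⟩
  rintro ⟨e0, e1, hcomp, hret⟩
  have hglue : cyclicSegalMap n m (glue cn cm e0 e1) = (cn, cm) :=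
    Prod.ext (cyclicSegalMap_glue_fst hret) (cyclicSegalMap_glue_snd hcomp)
  refine ⟨glue cn cm e0 e1, ?_, hglue⟩
  rw [isLambdaChain_iff_cyclicSegalMap, hglue]
  exact ⟨hcn, hcm⟩
end

section
/- In the free category 𝒬^n on the circular quiver Q^n, for every morphism f : i → j one has f ∘ w_i = w_j ∘ f, where w_i denotes the composite of the n+1 generating arrows around the full cycle starting and ending at i. Consequently the family (w_i)_{i ∈ ℤ/(n+1)} is a natural transformation from the identity functor of 𝒬^n to itself, making 𝒬^n a Λ-category. -/
open CategoryTheory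

abbrev CircVert (n : ℕ) := ZMod (n + 1)

instance circQuiver (n : ℕ) : Quiver (CircVert n) :=
  ⟨fun i j => PLift (j = i + 1)⟩

/-- The object of the path category `𝒬ⁿ` corresponding to a vertex. -/
abbrev vtx {n : ℕ} (i : CircVert n) : Paths (CircVert n) := i

/-- Length of a morphism in a path category. -/
def plen {V : Type*} [Quiver V] {a b : Paths V} (p : a ⟶ b) : ℕ :=
  Quiver.Path.length p

/-- The path of length `k` starting at `i` going around the circle. -/
def arc (n : ℕ) (i : CircVert n) : (k : ℕ) → Quiver.Path i (i + (k : ZMod (n + 1)))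
  | 0 => Quiver.Path.cast rfl (by simp) Quiver.Path.nil
  | k + 1 => (arc n i k).cons ⟨by push_cast; ring⟩

/-- The full-cycle endomorphism `w_i` of the vertex `i` in `𝒬ⁿ`. -/
def cycleW (n : ℕ) (i : CircVert n) : vtx i ⟶ vtx i :=
  Quiver.Path.cast rfl (by simp) (arc n i (n + 1))

/-- The shortest path `φ_{ij}` from `i` to `j` (the identity if `i = j`). -/
def shortPath (n : ℕ) (i j : CircVert n) : vtx i ⟶ vtx j :=
  Quiver.Path.cast rfl (by rw [ZMod.natCast_rightInverse (j - i)]; ring) (arc n i (j - i).val)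

/-- The generating arrow `i ⟶ i+1` of `𝒬ⁿ`. -/
def genHom (n : ℕ) (i : CircVert n) : vtx i ⟶ vtx (i + 1) :=
  Quiver.Hom.toPath ⟨rfl⟩

/-- Iteration (monoid power) of an endomorphism. -/
def endPow {C : Type*} [Category C] {X : C} (f : CategoryTheory.End X) (t : ℕ) :
    CategoryTheory.End X := f ^ t

/-!
Every vertex of `Qⁿ` has exactly one outgoing arrow, so a path is determined by its source and its
length. Both `w_i ≫ f` and `f ≫ w_j` start at `i` and have length `(n + 1) + |f|`, hence they are
equal; naturality of `(w_i)` is this same identity.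
-/

namespace Quiver.Path

variable {V : Type*} [Quiver V]

theorem sigma_eq_of_length_eq [∀ a : V, Subsingleton (Σ b, a ⟶ b)] {a b b' : V}
    (p : Path a b) (q : Path a b') (h : p.length = q.length) :
    (⟨b, p⟩ : Σ c, Path a c) = ⟨b', q⟩ := by
  induction p generalizing b' with
  | nil =>
    cases q with
    | nil => rfl
    | cons => simp at h
  | cons p e ih =>
    cases q with
    | nil => simp at h
    | cons q e' =>
      obtain ⟨rfl, rfl⟩ := Sigma.mk.inj (ih q (by simpa using h))
      obtain ⟨rfl, rfl⟩ := Sigma.mk.inj (Subsingleton.elim (⟨_, e⟩ : Σ c, _ ⟶ c) ⟨_, e'⟩)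
      rfl

theorem eq_of_length_eq [∀ a : V, Subsingleton (Σ b, a ⟶ b)] {a b : V} {p q : Path a b}
    (h : p.length = q.length) : p = q :=
  eq_of_heq (Sigma.mk.inj (sigma_eq_of_length_eq p q h)).2

@[simp]
theorem length_cast {a b a' b' : V} (ha : a = a') (hb : b = b') (p : Path a b) :
    (p.cast ha hb).length = p.length := by
  subst ha hb; rfl

end Quiver.Path

theorem plen_comp {V : Type*} [Quiver V] {a b c : Paths V} (f : a ⟶ b) (g : b ⟶ c) :
    plen (f ≫ g) = plen f + plen g :=
  Quiver.Path.length_comp f g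

instance (n : ℕ) (a : CircVert n) : Subsingleton (Σ b, a ⟶ b) :=
  ⟨fun ⟨_, ⟨hb⟩⟩ ⟨_, ⟨hc⟩⟩ => by subst hb hc; rfl⟩

@[simp]
theorem length_arc (n : ℕ) (i : CircVert n) (k : ℕ) : (arc n i k).length = k := by
  induction k with
  | zero => simp [arc]
  | succ k ih => simp [arc, ih]

theorem plen_cycleW (n : ℕ) (i : CircVert n) : plen (cycleW n i) = n + 1 := by
  simp [plen, cycleW]

theorem cycleW_comp_eq_comp_cycleW (n : ℕ) {i j : CircVert n} (f : vtx i ⟶ vtx j) :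
    cycleW n i ≫ f = f ≫ cycleW n j :=
  Quiver.Path.eq_of_length_eq <| by
    change plen (cycleW n i ≫ f) = plen (f ≫ cycleW n j)
    rw [plen_comp, plen_comp, plen_cycleW, plen_cycleW, add_comm]

/-- In the free category `𝒬ⁿ` on the circular quiver `Qⁿ`, every morphism
`f : i ⟶ j` satisfies `f ∘ w_i = w_j ∘ f` (written diagrammatically: `w_i ≫ f = f ≫ w_j`),
where `w_i` is the composite of the `n+1` generating arrows around the full cycle starting and
ending at `i`.  Consequently the family `(w_i)` is a natural transformation from the identity
functor of `𝒬ⁿ` to itself, making `𝒬ⁿ` a `Λ`-category. -/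
theorem full_cycle_natural (n : ℕ) :
    (∀ (i j : CircVert n) (f : vtx i ⟶ vtx j), cycleW n i ≫ f = f ≫ cycleW n j) ∧
    (∃ W : 𝟭 (Paths (CircVert n)) ⟶ 𝟭 (Paths (CircVert n)),
      ∀ i : CircVert n, W.app (vtx i) = cycleW n i) :=
  ⟨fun _ _ => cycleW_comp_eq_comp_cycleW n,
    ⟨{ app := cycleW n
       naturality := fun _ _ f => (cycleW_comp_eq_comp_cycleW n f).symm }, fun _ => rfl⟩⟩
end
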